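/- For every integer r ≥ 2 and every α ∈ [0,1], α²·2^{r−2}·r(r−1) + α·r·(3 − 2^r − r) + 2^{r+1} − 4 ≥ 0. -/

import Mathlib

/-!
For `r ≥ 3` the left-hand side is a quadratic in `α` with positive leading coefficient whose
discriminant is nonpositive, so it is nonnegative for every real `α`; with `x = 2 ^ r` the
discriminant factors as `-r * ((r - 2) * x * (x - 2 * (r + 1)) - r * (r - 3) ^ 2)`, and
`x ≥ 4 * r - 4` makes the bracket nonnegative. For `r = 2` the quadratic is
`2 * (1 - α) * (2 - α)`.
-/

theorem quadratic_nonneg_of_discrim_nonpos {K : Type*} [Field K] [LinearOrder K]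
    [IsStrictOrderedRing K] {a b c : K} (ha : 0 < a) (h : discrim a b c ≤ 0) (x : K) :
    0 ≤ a * (x * x) + b * x + c := by
  have hsq : 4 * a * (a * (x * x) + b * x + c) = (2 * a * x + b) ^ 2 - discrim a b c := by
    rw [discrim]; ring
  have : 0 ≤ 4 * a * (a * (x * x) + b * x + c) := by
    rw [hsq]; nlinarith [sq_nonneg (2 * a * x + b)]
  exact (mul_nonneg_iff_of_pos_left (by positivity)).mp this

theorem four_mul_le_two_pow_add_four {r : ℕ} (hr : 3 ≤ r) : 4 * r ≤ 2 ^ r + 4 := by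
  induction r, hr using Nat.le_induction with
  | base => norm_num
  | succ n _ ih => rw [pow_succ]; omega

theorem discrim_nonpos_of_four_mul_le_add_four {r x : ℝ} (hr : 3 ≤ r) (hx : 4 * r ≤ x + 4) :
    discrim (x / 4 * (r * (r - 1))) (r * (3 - x - r)) (2 * x - 4) ≤ 0 := by
  have hfactor : discrim (x / 4 * (r * (r - 1))) (r * (3 - x - r)) (2 * x - 4)
      = -r * ((r - 2) * x * (x - 2 * (r + 1)) - r * (r - 3) ^ 2) := by
    rw [discrim]; ring
  have hbracket : r * (r - 3) ^ 2 ≤ (r - 2) * x * (x - 2 * (r + 1)) :=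
    calc r * (r - 3) ^ 2 ≤ (r - 2) * r * (2 * (r - 3)) := by nlinarith
      _ ≤ (r - 2) * x * (x - 2 * (r + 1)) := by gcongr <;> nlinarith
  rw [hfactor]
  nlinarith

theorem stmt_3_general (r : ℕ) (hr : 2 ≤ r) (α : ℝ) (h1 : α ≤ 1) :
    0 ≤ α ^ 2 * 2 ^ (r - 2) * ((r : ℝ) * ((r : ℝ) - 1))
        + α * (r : ℝ) * (3 - 2 ^ r - (r : ℝ)) + 2 ^ (r + 1) - 4 := by
  obtain rfl | hr3 := hr.eq_or_lt
  · norm_num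
    nlinarith [mul_nonneg (sub_nonneg.2 h1) (by linarith : (0 : ℝ) ≤ 2 - α)]
  have hx : 4 * (r : ℝ) ≤ 2 ^ r + 4 := by exact_mod_cast four_mul_le_two_pow_add_four hr3
  have hr3' : (3 : ℝ) ≤ r := by exact_mod_cast hr3
  have ha : 0 < (2 : ℝ) ^ r / 4 * (r * (r - 1)) := by
    have : (0 : ℝ) < r - 1 := by linarith
    positivity
  have hquad :=
    quadratic_nonneg_of_discrim_nonpos ha (discrim_nonpos_of_four_mul_le_add_four hr3' hx) α
  have h4 : (2 : ℝ) ^ r = 2 ^ (r - 2) * 2 ^ 2 := (pow_sub_mul_pow 2 hr).symm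
  rw [h4] at hquad
  rw [pow_succ (2 : ℝ) r, h4]
  linear_combination hquad

theorem stmt_3 (r : ℕ) (hr : 2 ≤ r) (α : ℝ) (h0 : 0 ≤ α) (h1 : α ≤ 1) :
    0 ≤ α ^ 2 * 2 ^ (r - 2) * ((r : ℝ) * ((r : ℝ) - 1))
        + α * (r : ℝ) * (3 - 2 ^ r - (r : ℝ)) + 2 ^ (r + 1) - 4 :=
  stmt_3_general r hr α h1
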